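/- arXiv:2201.10287 — 5 statements merged into one kernel-verified Lean document; each statement's English description precedes it below -/
import Mathlib

section
/- If a category C has finite coproducts and colimits of all ω-chains, and an endofunctor Σ : C → C preserves colimits of ω-chains, then the forgetful functor from the category of Σ-algebras to C has a left adjoint. -/
open CategoryTheory CategoryTheory.Limits

universe v u

/-!
The free algebra on `X` is the colimit `A` of the chain
`X → X ⨿ F X → X ⨿ F (X ⨿ F X) → ⋯` whose first map is `inl` and whose later maps are
`𝟙 X ⨿ F (previous map)`. Since `F` preserves this colimit, `F A` is the colimit of the
image of the chain under `F`, and the injections `inr` of each `F`-image into the next stage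
assemble into the structure map `F A → A`. A map `f : X → B` into an algebra `(B, β)`
extends along the stages by `[f, β ∘ F(previous extension)]`, and any algebra morphism out
of `A` is determined, stage by stage, by its restriction to `X`.
-/

namespace CategoryTheory.Endofunctor.Algebra.Free

variable {C : Type u} [Category.{v} C] [HasBinaryCoproducts C] (F : C ⥤ C) (X : C)

noncomputable abbrev stage : ℕ → C
  | 0 => X
  | n + 1 => X ⨿ F.obj (stage n)

noncomputable def stageSucc : ∀ n, stage F X n ⟶ stage F X (n + 1)
  | 0 => coprod.inl
  | n + 1 => coprod.map (𝟙 X) (F.map (stageSucc n))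

lemma inl_stageSucc (n : ℕ) :
    (coprod.inl : X ⟶ stage F X (n + 1)) ≫ stageSucc F X (n + 1) = coprod.inl :=
  (coprod.inl_map _ _).trans (Category.id_comp _)

lemma inr_stageSucc (n : ℕ) :
    (coprod.inr : F.obj (stage F X n) ⟶ stage F X (n + 1)) ≫ stageSucc F X (n + 1) =
      F.map (stageSucc F X n) ≫ coprod.inr :=
  coprod.inr_map _ _

noncomputable abbrev chain : ℕ ⥤ C := Functor.ofSequence (stageSucc F X)

section Lift

variable {F X} {B : Algebra F} (f : X ⟶ B.a)

noncomputable def liftStage : ∀ n, stage F X n ⟶ B.a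
  | 0 => f
  | n + 1 => coprod.desc f (F.map (liftStage n) ≫ B.str)

lemma stageSucc_liftStage (n : ℕ) : stageSucc F X n ≫ liftStage f (n + 1) = liftStage f n := by
  induction n with
  | zero => exact coprod.inl_desc _ _
  | succ n ih =>
    refine coprod.hom_ext ?_ ?_
    · simp only [reassoc_of% inl_stageSucc, liftStage, coprod.inl_desc]
    · simp only [reassoc_of% inr_stageSucc, liftStage, coprod.inr_desc, ← F.map_comp_assoc]
      rw [← liftStage, ih]

noncomputable def liftCocone : Cocone (chain F X) where
  pt := B.a
  ι := NatTrans.ofSequence (liftStage f) fun n => by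
    rw [Functor.ofSequence_map_homOfLE_succ]
    exact (stageSucc_liftStage f n).trans (Category.comp_id _).symm

end Lift

section Colimit

variable [HasColimitsOfShape ℕ C]

noncomputable def ι (n : ℕ) : stage F X n ⟶ colimit (chain F X) := colimit.ι (chain F X) n

lemma stageSucc_ι (n : ℕ) : stageSucc F X n ≫ ι F X (n + 1) = ι F X n := by
  have h := colimit.w (chain F X) (homOfLE (n.le_add_right 1))
  rw [Functor.ofSequence_map_homOfLE_succ] at h
  exact h

lemma inl_ι (n : ℕ) : (coprod.inl : X ⟶ stage F X (n + 1)) ≫ ι F X (n + 1) = ι F X 0 := by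
  induction n with
  | zero => exact stageSucc_ι F X 0
  | succ n ih => rw [← ih, ← stageSucc_ι F X (n + 1), reassoc_of% inl_stageSucc]

noncomputable def desc {B : Algebra F} (f : X ⟶ B.a) : colimit (chain F X) ⟶ B.a :=
  colimit.desc (chain F X) (liftCocone f)

lemma ι_desc {B : Algebra F} (f : X ⟶ B.a) (n : ℕ) : ι F X n ≫ desc F X f = liftStage f n :=
  colimit.ι_desc (liftCocone f) n

variable [PreservesColimitsOfShape ℕ F]

noncomputable def strCocone : Cocone (chain F X ⋙ F) where
  pt := colimit (chain F X)
  ι := NatTrans.ofSequence (fun n => coprod.inr ≫ ι F X (n + 1)) fun n => by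
    simp only [Functor.comp_map, Functor.ofSequence_map_homOfLE_succ,
      Functor.const_obj_map]
    show F.map (stageSucc F X n) ≫ coprod.inr ≫ ι F X (n + 2) =
      (coprod.inr ≫ ι F X (n + 1)) ≫ 𝟙 _
    rw [Category.comp_id, ← stageSucc_ι F X (n + 1), reassoc_of% inr_stageSucc]

noncomputable def str : F.obj (colimit (chain F X)) ⟶ colimit (chain F X) :=
  (isColimitOfPreserves F (colimit.isColimit (chain F X))).desc (strCocone F X)

lemma map_ι_str (n : ℕ) : F.map (ι F X n) ≫ str F X = coprod.inr ≫ ι F X (n + 1) :=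
  (isColimitOfPreserves F (colimit.isColimit (chain F X))).fac (strCocone F X) n

noncomputable abbrev alg : Algebra F := ⟨colimit (chain F X), str F X⟩

noncomputable def unit : X ⟶ (forget F).obj (alg F X) := ι F X 0

variable {F X} {B : Algebra F}

lemma hom_ext {g h : alg F X ⟶ B} (w : unit F X ≫ g.f = unit F X ≫ h.f) : g = h := by
  refine Hom.ext (colimit.hom_ext fun n => ?_)
  change ι F X n ≫ g.f = ι F X n ≫ h.f
  induction n with
  | zero => exact w
  | succ n ih =>
    refine coprod.hom_ext ?_ ?_
    · rw [reassoc_of% inl_ι, reassoc_of% inl_ι]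
      exact w
    · have inr_ι_comp (k : alg F X ⟶ B) :
          coprod.inr ≫ ι F X (n + 1) ≫ k.f = F.map (ι F X n ≫ k.f) ≫ B.str := by
        rw [← reassoc_of% map_ι_str, ← k.h, Functor.map_comp_assoc]
      rw [inr_ι_comp, inr_ι_comp, ih]

variable (f : X ⟶ B.a)

noncomputable def lift : alg F X ⟶ B where
  f := desc F X f
  h := (isColimitOfPreserves F (colimit.isColimit (chain F X))).hom_ext fun n => by
    show F.map (ι F X n) ≫ F.map (desc F X f) ≫ B.str =
      F.map (ι F X n) ≫ str F X ≫ desc F X f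
    rw [← F.map_comp_assoc, ι_desc, reassoc_of% map_ι_str F X n, ι_desc]
    exact (coprod.inr_desc _ _).symm

lemma unit_lift : unit F X ≫ (lift f).f = f := ι_desc F X f 0

variable (F X)

noncomputable def isInitial : IsInitial (StructuredArrow.mk (unit F X)) :=
  IsInitial.ofUniqueHom (fun g => StructuredArrow.homMk (lift g.hom) (unit_lift g.hom))
    fun g m => StructuredArrow.ext _ _ <|
      hom_ext ((StructuredArrow.w m).trans (unit_lift g.hom).symm)

end Colimit

end CategoryTheory.Endofunctor.Algebra.Free

/-- If a category `C` has finite coproducts and colimits of all ω-chains, and an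
endofunctor `Σ : C ⥤ C` preserves colimits of ω-chains, then the forgetful functor
from the category of `Σ`-algebras to `C` has a left adjoint. -/
theorem free_algebras_exist {C : Type u} [Category.{v} C]
    [HasFiniteCoproducts C] [HasColimitsOfShape ℕ C]
    (F : C ⥤ C) [PreservesColimitsOfShape ℕ F] :
    (Endofunctor.Algebra.forget F).IsRightAdjoint := by
  have (X : C) : HasInitial (StructuredArrow X (Endofunctor.Algebra.forget F)) :=
    (Endofunctor.Algebra.Free.isInitial F X).hasInitial
  exact isRightAdjointOfStructuredArrowInitials _
end

section
/- For an endofunctor Σ on a category C with finite coproducts and colimits of ω-chains, where Σ preserves both, the free Σ-algebra on an object X is carried by the initial algebra μY.(X + Σ Y), with structure map given by the composite of the second coproduct injection with the initial-algebra structure map, and the unit of the free–forgetful adjunction at X is the composite of the first injection with the structure map. -/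
/-!
By Adámek's theorem, an endofunctor `H` preserving colimits of `ω`-chains has an initial algebra,
the colimit of the initial chain `⊥ → H ⊥ → H² ⊥ → ⋯`. This applies to `H = X ⨿ F -`, because
`X ⨿ -` preserves connected colimits. A map `h : μH ⟶ B` is an `H`-algebra morphism into
`(B, [g, b])` exactly when `h ∘ in ∘ ι₂ = b ∘ F h` and `h ∘ in ∘ ι₁ = g`, so initiality of `μH`
is the universal property of the free `F`-algebra on `X`.
-/

open CategoryTheory CategoryTheory.Limits

universe v u

variable {C : Type u} [Category.{v} C]

@[simps]
noncomputable def plusF [HasBinaryCoproducts C] (F : C ⥤ C) (X : C) : C ⥤ C where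
  obj Y := X ⨿ F.obj Y
  map f := coprod.map (𝟙 X) (F.map f)

section ConnectedColimits

variable [HasBinaryCoproducts C] {J : Type*} [Category J] [IsConnected J]

lemma existsUnique_coprod_desc_of_isColimit {K : J ⥤ C} {c : Cocone K} (hc : IsColimit c) (X : C)
    {T : C} (t : ∀ j, X ⨿ K.obj j ⟶ T)
    (ht : ∀ {j j' : J} (f : j ⟶ j'), coprod.map (𝟙 X) (K.map f) ≫ t j' = t j) :
    ∃! u : X ⨿ c.pt ⟶ T, ∀ j, coprod.map (𝟙 X) (c.ι.app j) ≫ u = t j := by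
  have inl_const (j : J) : coprod.inl ≫ t j = coprod.inl ≫ t (Classical.arbitrary J) :=
    constant_of_preserves_morphisms (fun j => coprod.inl ≫ t j)
      (fun _ _ f => by simp [← ht f]) _ _
  let inrCocone : Cocone K :=
    { pt := T
      ι.app j := coprod.inr ≫ t j
      ι.naturality _ _ f := by simp [← ht f] }
  refine ⟨coprod.desc (coprod.inl ≫ t (Classical.arbitrary J)) (hc.desc inrCocone),
    fun j => coprod.hom_ext ?_ ?_, fun u hu => coprod.hom_ext ?_ ?_⟩
  · rw [coprod.inl_map_assoc, Category.id_comp, coprod.inl_desc, inl_const j]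
  · rw [coprod.inr_map_assoc, coprod.inr_desc]
    exact hc.fac inrCocone j
  · rw [coprod.inl_desc, ← hu, coprod.inl_map_assoc, Category.id_comp]
    rfl
  · rw [coprod.inr_desc]
    refine hc.uniq inrCocone _ fun j => ?_
    change _ = coprod.inr ≫ t j
    rw [← hu j, coprod.inr_map_assoc]
    rfl

instance coprod_functor_preservesColimitsOfShape (X : C) :
    PreservesColimitsOfShape J (coprod.functor.obj X) where
  preservesColimit := ⟨fun hc => ⟨IsColimit.ofExistsUnique fun s =>
    existsUnique_coprod_desc_of_isColimit hc X s.ι.app fun f => s.w f⟩⟩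

instance plusF_preservesColimitsOfShape (F : C ⥤ C) [PreservesColimitsOfShape J F] (X : C) :
    PreservesColimitsOfShape J (plusF F X) :=
  inferInstanceAs (PreservesColimitsOfShape J (F ⋙ coprod.functor.obj X))

end ConnectedColimits

instance : IsConnected ℕ := IsFiltered.isConnected ℕ

namespace CategoryTheory.Endofunctor

section InitialChain

variable (G : C ⥤ C) [HasInitial C]

-- `initialChainObj`, `initialChain`, `Algebra.initialChainCocone` and `colimitAlgebra` are
-- reducible so that e.g. `(initialChain G).obj (n + 1)` and `G.obj ((initialChain G).obj n)`
-- agree up to reducible unfolding, which `rw` needs to rewrite along cocone legs.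
@[reducible]
noncomputable def initialChainObj : ℕ → C
  | 0 => ⊥_ C
  | n + 1 => G.obj (initialChainObj n)

noncomputable def initialChainMap : ∀ n, initialChainObj G n ⟶ initialChainObj G (n + 1)
  | 0 => initial.to _
  | n + 1 => G.map (initialChainMap n)

@[reducible]
noncomputable def initialChain : ℕ ⥤ C where
  obj := initialChainObj G
  __ := Functor.ofSequence (initialChainMap G)

lemma initialChain_map_succ (n : ℕ) :
    (initialChain G).map (homOfLE (Nat.le_add_right n 1)) = initialChainMap G n :=
  Functor.ofSequence_map_homOfLE_succ _ n

variable {G}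

noncomputable def Algebra.fromInitialChain (B : Algebra G) : ∀ n, initialChainObj G n ⟶ B.a
  | 0 => initial.to _
  | n + 1 => G.map (B.fromInitialChain n) ≫ B.str

lemma Algebra.initialChainMap_comp_fromInitialChain (B : Algebra G) (n : ℕ) :
    initialChainMap G n ≫ B.fromInitialChain (n + 1) = B.fromInitialChain n := by
  induction n with
  | zero => exact initial.hom_ext _ _
  | succ n ih =>
    simp only [initialChainMap, fromInitialChain] at ih ⊢
    rw [← G.map_comp_assoc, ih]

noncomputable abbrev Algebra.initialChainCocone (B : Algebra G) : Cocone (initialChain G) where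
  pt := B.a
  ι := NatTrans.ofSequence B.fromInitialChain fun n => by
    rw [initialChain_map_succ]
    exact (B.initialChainMap_comp_fromInitialChain n).trans (Category.comp_id _).symm

noncomputable def shiftedCocone (c : Cocone (initialChain G)) : Cocone (initialChain G ⋙ G) where
  pt := c.pt
  ι := NatTrans.ofSequence (fun n => c.ι.app (n + 1)) fun n => by
    have h := c.w (homOfLE (Nat.le_add_right (n + 1) 1))
    rw [initialChain_map_succ] at h
    rw [Functor.comp_map, initialChain_map_succ]
    exact h.trans (Category.comp_id _).symm

variable {c : Cocone (initialChain G)}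

noncomputable abbrev colimitAlgebra (hGc : IsColimit (G.mapCocone c)) : Algebra G :=
  ⟨c.pt, hGc.desc (shiftedCocone c)⟩

lemma map_ι_comp_colimitAlgebra_str (hGc : IsColimit (G.mapCocone c)) (n : ℕ) :
    G.map (c.ι.app n) ≫ (colimitAlgebra hGc).str = c.ι.app (n + 1) :=
  hGc.fac (shiftedCocone c) n

lemma ι_comp_colimitAlgebra_hom {hGc : IsColimit (G.mapCocone c)} {B : Algebra G}
    (f : colimitAlgebra hGc ⟶ B) (n : ℕ) : c.ι.app n ≫ f.f = B.fromInitialChain n := by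
  induction n with
  | zero => exact initial.hom_ext _ _
  | succ n ih =>
    have h := congrArg (· ≫ f.f) (map_ι_comp_colimitAlgebra_str hGc n)
    rw [Category.assoc, ← f.h, ← G.map_comp_assoc, ih] at h
    exact h.symm

noncomputable def isInitialColimitAlgebra (hc : IsColimit c) (hGc : IsColimit (G.mapCocone c)) :
    IsInitial (colimitAlgebra hGc) :=
  IsInitial.ofUniqueHom
    (fun B => ⟨hc.desc B.initialChainCocone, hGc.hom_ext fun n => by
      change G.map (c.ι.app n) ≫ _ = G.map (c.ι.app n) ≫ _
      rw [← G.map_comp_assoc, hc.fac, ← Category.assoc, map_ι_comp_colimitAlgebra_str, hc.fac]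
      rfl⟩)
    (fun B f => Algebra.Hom.ext <| hc.hom_ext fun n =>
      (ι_comp_colimitAlgebra_hom f n).trans (ι_comp_colimitAlgebra_hom _ n).symm)

end InitialChain

theorem exists_isInitial_algebra (G : C ⥤ C) [HasInitial C] [HasColimitsOfShape ℕ C]
    [PreservesColimitsOfShape ℕ G] : ∃ M : Algebra G, Nonempty (IsInitial M) :=
  ⟨_, ⟨isInitialColimitAlgebra (colimit.isColimit (initialChain G))
    (isColimitOfPreserves G (colimit.isColimit _))⟩⟩

lemma Algebra.existsUnique_hom_of_isInitial {G : C ⥤ C} {A : Algebra G} (hA : IsInitial A)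
    (B : Algebra G) : ∃! h : A.a ⟶ B.a, G.map h ≫ B.str = A.str ≫ h :=
  ⟨(hA.to B).f, (hA.to B).h, fun h hh => congrArg Algebra.Hom.f (hA.hom_ext ⟨h, hh⟩ _)⟩

end CategoryTheory.Endofunctor

lemma coprod_map_comp_desc_eq_comp_iff [HasBinaryCoproducts C] {F : C ⥤ C} {X A : C}
    (s : X ⨿ F.obj A ⟶ A) (B : Endofunctor.Algebra F) (g : X ⟶ B.a) (h : A ⟶ B.a) :
    coprod.map (𝟙 X) (F.map h) ≫ coprod.desc g B.str = s ≫ h ↔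
      (coprod.inr ≫ s) ≫ h = F.map h ≫ B.str ∧ (coprod.inl ≫ s) ≫ h = g := by
  rw [coprod.map_desc, Category.id_comp]
  constructor
  · intro hh
    rw [Category.assoc, Category.assoc, ← hh, coprod.inr_desc, coprod.inl_desc]
    exact ⟨rfl, rfl⟩
  · rintro ⟨hr, hl⟩
    ext
    · rw [coprod.inl_desc, ← Category.assoc, hl]
    · rw [coprod.inr_desc, ← Category.assoc, hr]

theorem free_algebra_is_initial_algebra_of_plus_general
    [HasFiniteCoproducts C] [HasColimitsOfShape ℕ C]
    (F : C ⥤ C) [PreservesColimitsOfShape ℕ F]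
    (X : C) :
    ∃ M : Endofunctor.Algebra (plusF F X), Nonempty (IsInitial M) ∧
      ∀ (B : Endofunctor.Algebra F) (g : X ⟶ B.a),
        ∃! h : M.a ⟶ B.a,
          ((coprod.inr ≫ M.str) ≫ h = F.map h ≫ B.str) ∧
          (coprod.inl ≫ M.str) ≫ h = g := by
  obtain ⟨M, ⟨hM⟩⟩ := Endofunctor.exists_isInitial_algebra (plusF F X)
  refine ⟨M, ⟨hM⟩, fun B g => ?_⟩
  exact (existsUnique_congr fun h => coprod_map_comp_desc_eq_comp_iff M.str B g h).1
    (Endofunctor.Algebra.existsUnique_hom_of_isInitial hM ⟨B.a, coprod.desc g B.str⟩)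

/-- The free `Σ`-algebra on `X` is carried by the initial algebra `μY.(X + Σ Y)`,
with structure map `in ∘ ι₂` and unit `in ∘ ι₁`: the `Σ`-algebra
`(M.a, coprod.inr ≫ M.str)` together with `coprod.inl ≫ M.str : X ⟶ M.a` enjoys the
universal property of the free `Σ`-algebra on `X`. -/
theorem free_algebra_is_initial_algebra_of_plus
    [HasFiniteCoproducts C] [HasColimitsOfShape ℕ C]
    (F : C ⥤ C) [PreservesColimitsOfShape ℕ F] [PreservesFiniteCoproducts F]
    (X : C) :
    ∃ M : Endofunctor.Algebra (plusF F X), Nonempty (IsInitial M) ∧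
      ∀ (B : Endofunctor.Algebra F) (g : X ⟶ B.a),
        ∃! h : M.a ⟶ B.a,
          ((coprod.inr ≫ M.str) ≫ h = F.map h ≫ B.str) ∧
          (coprod.inl ≫ M.str) ≫ h = g :=
  free_algebra_is_initial_algebra_of_plus_general F X
end

section
/- Characterization of free functorial algebras: the free Fn-algebra on (H, X) in Endo_f(C) × C is carried by (G* H, (I_{G* H})* X), with structure maps given by the structure maps of the free G-algebra on H and of the free I_{G* H}-algebra on X respectively; i.e., Free_Fn is naturally isomorphic to the functor (H, X) ↦ ⟨G* H, (I_{G* H})* X, op^{G*}_H, op^{(I_{G* H})*}_X⟩. -/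
/-!
The `G`-component of a morphism out of `⟨GH, IX, opG, opI⟩` is forced by freeness of
`GH`: it is the unique `G`-algebra map `σ' : GH ⟶ B.H` extending `σ`. Once `σ'` is fixed,
the compatibility square for the base component `IX ⟶ B.X` says precisely that it is an
`I_{GH}`-algebra map into `B.X`, equipped with the `I_{B.H}`-structure of `B` restricted
along `σ'`; freeness of `IX` then determines it.
-/

open CategoryTheory CategoryTheory.Limits

universe v u

/-- An object `X` is finitely presentable if `Hom(X, -)` preserves filtered colimits. -/
def IsFinitelyPresentable {C : Type u} [Category.{v} C] (X : C) : Prop :=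
  Nonempty (PreservesFilteredColimits (coyoneda.obj (Opposite.op X)))

/-- A category is locally finitely presentable if it is cocomplete and has a (small)
family of finitely presentable objects such that every object is a filtered colimit
of objects of the family. -/
class LocallyFinitelyPresentable (C : Type u) [Category.{v} C] : Prop where
  hasColimits : HasColimits C
  exists_generators :
    ∃ (ι : Type v) (gen : ι → C), (∀ i, _root_.IsFinitelyPresentable (gen i)) ∧
      ∀ X : C, ∃ (J : Type v) (_ : SmallCategory J) (_ : IsFiltered J)
        (D : J ⥤ C) (c : Cocone D),
          Nonempty (IsColimit c) ∧ c.pt = X ∧ ∀ j : J, ∃ i : ι, D.obj j = gen i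

instance (priority := 100) LocallyFinitelyPresentable.toHasColimits
    {C : Type u} [Category.{v} C] [LocallyFinitelyPresentable C] : HasColimits C :=
  LocallyFinitelyPresentable.hasColimits

variable {C : Type u} [Category.{v} C]

/-- The object part of the grammar functor `G H = Id + Σ∘H + Γ∘H∘H`. -/
noncomputable def Gobj [HasColimits C] (Sg Gg H : C ⥤ C) : C ⥤ C :=
  𝟭 C ⨿ ((H ⋙ Sg) ⨿ (H ⋙ H ⋙ Gg))

/-- The morphism part of the grammar functor `G`. -/
noncomputable def Gmap [HasColimits C] (Sg Gg : C ⥤ C) {H K : C ⥤ C} (h : H ⟶ K) :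
    Gobj Sg Gg H ⟶ Gobj Sg Gg K :=
  coprod.map (𝟙 (𝟭 C)) (coprod.map (Functor.whiskerRight h Sg) (Functor.whiskerRight (h ◫ h) Gg))

/-- A functorial algebra for signatures `Σ` (here `Sg`) and `Γ` (here `Gg`): a
finitary endofunctor carrier `H` with a `G`-algebra structure, together with a base
carrier `X` with an `I_H`-algebra structure `Σ X + Γ (H X) ⟶ X`. -/
structure FnAlg [HasColimits C] (Sg Gg : C ⥤ C) where
  H : C ⥤ C
  fin : Nonempty (PreservesFilteredColimits H)
  X : C
  algG : Gobj Sg Gg H ⟶ H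
  algI : Sg.obj X ⨿ Gg.obj (H.obj X) ⟶ X

/-- A morphism of functorial algebras. -/
structure FnAlgHom [HasColimits C] (Sg Gg : C ⥤ C) (A B : FnAlg Sg Gg) where
  σ : A.H ⟶ B.H
  f : A.X ⟶ B.X
  commG : A.algG ≫ σ = Gmap Sg Gg σ ≫ B.algG
  commI : A.algI ≫ f =
    coprod.map (Sg.map f) (Gg.map (σ.app A.X ≫ B.H.map f)) ≫ B.algI

section Restriction

variable [HasColimits C] {Sg : C ⥤ C} (Gg : C ⥤ C)

noncomputable def restrictAlgI {K L : C ⥤ C} (τ : K ⟶ L) {Y : C}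
    (δ : Sg.obj Y ⨿ Gg.obj (L.obj Y) ⟶ Y) : Sg.obj Y ⨿ Gg.obj (K.obj Y) ⟶ Y :=
  coprod.map (𝟙 _) (Gg.map (τ.app Y)) ≫ δ

theorem coprod_map_comp_restrictAlgI {K L : C ⥤ C} (τ : K ⟶ L) {Y Z : C}
    (δ : Sg.obj Y ⨿ Gg.obj (L.obj Y) ⟶ Y) (g : Z ⟶ Y) :
    coprod.map (Sg.map g) (Gg.map (K.map g)) ≫ restrictAlgI Gg τ δ =
      coprod.map (Sg.map g) (Gg.map (τ.app Z ≫ L.map g)) ≫ δ := by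
  rw [restrictAlgI, ← Category.assoc, coprod.map_map, Category.comp_id, ← Gg.map_comp,
    τ.naturality]

end Restriction

theorem FnAlgHom.ext [HasColimits C] {Sg Gg : C ⥤ C} {A B : FnAlg Sg Gg}
    {p q : FnAlgHom Sg Gg A B} (hσ : p.σ = q.σ) (hf : p.f = q.f) : p = q := by
  cases p
  cases q
  subst hσ hf
  rfl

theorem free_functorial_algebra_characterization_general [LocallyFinitelyPresentable C]
    (Sg Gg : C ⥤ C)
    (H : C ⥤ C) (X : C)
    -- the free G-algebra on H (among finitary endofunctors)
    (GH : C ⥤ C) (hGH : Nonempty (PreservesFilteredColimits GH))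
    (opG : Gobj Sg Gg GH ⟶ GH) (ηG : H ⟶ GH)
    (hfreeG : ∀ K : C ⥤ C, Nonempty (PreservesFilteredColimits K) →
      ∀ (γ : Gobj Sg Gg K ⟶ K) (σ : H ⟶ K),
        ∃! σ' : GH ⟶ K, ηG ≫ σ' = σ ∧ opG ≫ σ' = Gmap Sg Gg σ' ≫ γ)
    -- the free I_{GH}-algebra on X
    (IX : C) (opI : Sg.obj IX ⨿ Gg.obj (GH.obj IX) ⟶ IX) (ηI : X ⟶ IX)
    (hfreeI : ∀ (Y : C) (δ : Sg.obj Y ⨿ Gg.obj (GH.obj Y) ⟶ Y) (f : X ⟶ Y),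
      ∃! f' : IX ⟶ Y, ηI ≫ f' = f ∧
        opI ≫ f' = coprod.map (Sg.map f') (Gg.map (GH.map f')) ≫ δ) :
    ∀ (B : FnAlg Sg Gg) (σ : H ⟶ B.H) (f : X ⟶ B.X),
      ∃! p : FnAlgHom Sg Gg ⟨GH, hGH, IX, opG, opI⟩ B,
        ηG ≫ p.σ = σ ∧ ηI ≫ p.f = f := by
  intro B σ f
  obtain ⟨σ', ⟨hσ'η, hσ'op⟩, hσ'uniq⟩ := hfreeG B.H B.fin B.algG σ
  obtain ⟨f', ⟨hf'η, hf'op⟩, hf'uniq⟩ := hfreeI B.X (restrictAlgI Gg σ' B.algI) f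
  refine ⟨⟨σ', f', hσ'op, by rw [hf'op, coprod_map_comp_restrictAlgI]⟩, ⟨hσ'η, hf'η⟩, ?_⟩
  rintro p ⟨hpη, hpηI⟩
  obtain rfl : p.σ = σ' := hσ'uniq p.σ ⟨hpη, p.commG⟩
  have hf : p.f = f' :=
    hf'uniq p.f ⟨hpηI, by rw [coprod_map_comp_restrictAlgI]; exact p.commI⟩
  exact FnAlgHom.ext rfl hf

/-- Characterization of free functorial algebras: the free `Fn`-algebra on `(H, X)`
is carried by `(G* H, (I_{G* H})* X)` with structure maps those of the free
`G`-algebra on `H` and of the free `I_{G* H}`-algebra on `X`: given the free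
`G`-algebra `(GH, opG)` on `H` (with unit `ηG`) and the free `I_{GH}`-algebra
`(IX, opI)` on `X` (with unit `ηI`), the functorial algebra `⟨GH, IX, opG, opI⟩`
with units `(ηG, ηI)` is the free functorial algebra on `(H, X)`. -/
theorem free_functorial_algebra_characterization [LocallyFinitelyPresentable C]
    (Sg Gg : C ⥤ C)
    (hS : Nonempty (PreservesFilteredColimits Sg))
    (hG : Nonempty (PreservesFilteredColimits Gg))
    (H : C ⥤ C) (hH : Nonempty (PreservesFilteredColimits H)) (X : C)
    -- the free G-algebra on H (among finitary endofunctors)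
    (GH : C ⥤ C) (hGH : Nonempty (PreservesFilteredColimits GH))
    (opG : Gobj Sg Gg GH ⟶ GH) (ηG : H ⟶ GH)
    (hfreeG : ∀ K : C ⥤ C, Nonempty (PreservesFilteredColimits K) →
      ∀ (γ : Gobj Sg Gg K ⟶ K) (σ : H ⟶ K),
        ∃! σ' : GH ⟶ K, ηG ≫ σ' = σ ∧ opG ≫ σ' = Gmap Sg Gg σ' ≫ γ)
    -- the free I_{GH}-algebra on X
    (IX : C) (opI : Sg.obj IX ⨿ Gg.obj (GH.obj IX) ⟶ IX) (ηI : X ⟶ IX)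
    (hfreeI : ∀ (Y : C) (δ : Sg.obj Y ⨿ Gg.obj (GH.obj Y) ⟶ Y) (f : X ⟶ Y),
      ∃! f' : IX ⟶ Y, ηI ≫ f' = f ∧
        opI ≫ f' = coprod.map (Sg.map f') (Gg.map (GH.map f')) ≫ δ) :
    ∀ (B : FnAlg Sg Gg) (σ : H ⟶ B.H) (f : X ⟶ B.X),
      ∃! p : FnAlgHom Sg Gg ⟨GH, hGH, IX, opG, opI⟩ B,
        ηG ≫ p.σ = σ ∧ ηI ≫ p.f = f :=
  free_functorial_algebra_characterization_general Sg Gg H X GH hGH opG ηG hfreeG IX opI ηI hfreeI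
end

section
/- For endofunctors X ↦ A + F X, if the initial algebra of Y ↦ (A + F(−)) is computed via the 'diagonal rule', then the initial algebra P of G H = Id + Σ∘H + Γ∘H∘H in Endo_f(C) is isomorphic, as an endofunctor, to the free monad (Σ + Γ ∘ P)* on the endofunctor Σ + Γ ∘ P, i.e., P ≅ μX.(Id + (Σ + Γ∘P) ∘ X). -/
open CategoryTheory CategoryTheory.Limits

universe v u

variable {C : Type u} [Category.{v} C]

/-! Write `T(X, Y) = Id + Σ∘Y + Γ∘X∘Y`, a bifunctor whose diagonal is the grammar functor `G` and
whose section `T(P, -)` is `Id + (Σ + Γ∘P)∘(-)`. Initiality of `Q` for `T(P, -)` gives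
`h : Q ⟶ P`, and `T(h, Q)` makes `Q` a `G`-algebra, whence `k : P ⟶ Q`. Bifunctoriality shows
that `k ≫ h` is a `G`-algebra endomorphism of `P`, so `k ≫ h = 𝟙`; using this, `h ≫ k` is a
`T(P, -)`-algebra endomorphism of `Q`, so `h ≫ k = 𝟙`. -/

open CategoryTheory.Prod

theorem diagonal_initial_algebra_nonempty_iso {D : Type*} [Category D] (T : D × D ⥤ D)
    (S : D → Prop) {P Q : D} (hP : S P) (hQ : S Q) (ιP : T.obj (P, P) ⟶ P) (ιQ : T.obj (P, Q) ⟶ Q)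
    (hPinit : ∀ H, S H → ∀ α : T.obj (H, H) ⟶ H, ∃! h : P ⟶ H, ιP ≫ h = T.map (h ×ₘ h) ≫ α)
    (hQinit : ∀ H, S H → ∀ α : T.obj (P, H) ⟶ H, ∃! h : Q ⟶ H, ιQ ≫ h = T.map (𝟙 P ×ₘ h) ≫ α) :
    Nonempty (P ≅ Q) := by
  obtain ⟨h, hh, -⟩ := hQinit P hP ιP
  obtain ⟨k, hk, -⟩ := hPinit Q hQ (T.map (h ×ₘ 𝟙 Q) ≫ ιQ)
  have hkh : k ≫ h = 𝟙 P := by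
    refine (hPinit P hP ιP).unique ?_ (by simp)
    calc ιP ≫ k ≫ h = T.map (k ×ₘ k) ≫ T.map (h ×ₘ 𝟙 Q) ≫ ιQ ≫ h := by
          rw [reassoc_of% hk]
      _ = T.map (k ×ₘ k) ≫ T.map (h ×ₘ 𝟙 Q) ≫ T.map (𝟙 P ×ₘ h) ≫ ιP := by rw [hh]
      _ = T.map ((k ≫ h) ×ₘ (k ≫ h)) ≫ ιP := by
          simp only [← T.map_comp_assoc, prod_comp, Category.id_comp, Category.comp_id]
  have hhk : h ≫ k = 𝟙 Q := by
    refine (hQinit Q hQ ιQ).unique ?_ (by simp)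
    calc ιQ ≫ h ≫ k = T.map (𝟙 P ×ₘ h) ≫ T.map (k ×ₘ k) ≫ T.map (h ×ₘ 𝟙 Q) ≫ ιQ := by
          rw [reassoc_of% hh, hk]
      _ = T.map ((k ≫ h) ×ₘ (h ≫ k)) ≫ ιQ := by
          simp only [← T.map_comp_assoc, prod_comp, Category.id_comp, Category.comp_id]
      _ = T.map (𝟙 P ×ₘ (h ≫ k)) ≫ ιQ := by rw [hkh]
  exact ⟨⟨k, h, hkh, hhk⟩⟩

-- `Gobj` and `Gmap` are definitionally the diagonal of this bifunctor.
noncomputable def grammarBifunctor [HasColimits C] (Sg Gg : C ⥤ C) :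
    (C ⥤ C) × (C ⥤ C) ⥤ (C ⥤ C) where
  obj PH := 𝟭 C ⨿ ((PH.2 ⋙ Sg) ⨿ (PH.2 ⋙ PH.1 ⋙ Gg))
  map f := coprod.map (𝟙 (𝟭 C))
    (coprod.map (Functor.whiskerRight f.2 Sg) (Functor.whiskerRight (f.2 ◫ f.1) Gg))
  map_id PH := by
    have hΓ : Functor.whiskerRight (𝟙 PH.2 ◫ 𝟙 PH.1) Gg = 𝟙 (PH.2 ⋙ PH.1 ⋙ Gg) := by
      rw [Functor.id_hcomp, Functor.whiskerLeft_id']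
      exact Functor.whiskerRight_id' Gg
    simp only [prod_id_fst, prod_id_snd, hΓ, Functor.whiskerRight_id', coprod.map_id_id]
  map_comp f g := by
    simp only [prod_comp_fst, prod_comp_snd, NatTrans.exchange, Functor.whiskerRight_comp,
      coprod.map_map, Category.comp_id]

theorem grammarBifunctor_map_id_left [HasColimits C] (Sg Gg P : C ⥤ C) {H K : C ⥤ C}
    (h : H ⟶ K) :
    (grammarBifunctor Sg Gg).map (𝟙 P ×ₘ h) =
      coprod.map (𝟙 (𝟭 C))
        (coprod.map (Functor.whiskerRight h Sg) (Functor.whiskerRight h (P ⋙ Gg))) := by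
  simp only [grammarBifunctor, Functor.hcomp_id]
  rfl

theorem initial_grammar_algebra_iso_free_monad_general [LocallyFinitelyPresentable C]
    (Sg Gg : C ⥤ C)
    -- P, the initial G-algebra among finitary endofunctors
    (P : C ⥤ C) (hP : Nonempty (PreservesFilteredColimits P))
    (ιP : Gobj Sg Gg P ≅ P)
    (hPinit : ∀ H : C ⥤ C, Nonempty (PreservesFilteredColimits H) →
      ∀ α : Gobj Sg Gg H ⟶ H,
        ∃! h : P ⟶ H, ιP.hom ≫ h = Gmap Sg Gg h ≫ α)
    -- Q, the initial algebra of X ↦ Id + Σ∘X + Γ∘P∘X among finitary endofunctors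
    (Q : C ⥤ C) (hQ : Nonempty (PreservesFilteredColimits Q))
    (ιQ : (𝟭 C ⨿ ((Q ⋙ Sg) ⨿ (Q ⋙ P ⋙ Gg))) ≅ Q)
    (hQinit : ∀ H : C ⥤ C, Nonempty (PreservesFilteredColimits H) →
      ∀ α : (𝟭 C ⨿ ((H ⋙ Sg) ⨿ (H ⋙ P ⋙ Gg))) ⟶ H,
        ∃! h : Q ⟶ H,
          ιQ.hom ≫ h =
            coprod.map (𝟙 (𝟭 C))
              (coprod.map (Functor.whiskerRight h Sg) (Functor.whiskerRight h (P ⋙ Gg))) ≫ α) :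
    Nonempty (P ≅ Q) := by
  refine diagonal_initial_algebra_nonempty_iso (grammarBifunctor Sg Gg)
    (fun H => Nonempty (PreservesFilteredColimits H)) hP hQ ιP.hom ιQ.hom hPinit ?_
  intro H hH α
  simp only [grammarBifunctor_map_id_left]
  exact hQinit H hH α

/-- The initial algebra `P` of `G H = Id + Σ∘H + Γ∘H∘H` on finitary endofunctors is
isomorphic, as an endofunctor, to the free monad `(Σ + Γ∘P)*`, i.e. to the initial
algebra `Q` of `X ↦ Id + (Σ + Γ∘P) ∘ X = Id + Σ∘X + Γ∘P∘X` ("diagonal rule"). -/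
theorem initial_grammar_algebra_iso_free_monad [LocallyFinitelyPresentable C]
    (Sg Gg : C ⥤ C)
    (hS : Nonempty (PreservesFilteredColimits Sg))
    (hG : Nonempty (PreservesFilteredColimits Gg))
    -- P, the initial G-algebra among finitary endofunctors
    (P : C ⥤ C) (hP : Nonempty (PreservesFilteredColimits P))
    (ιP : Gobj Sg Gg P ≅ P)
    (hPinit : ∀ H : C ⥤ C, Nonempty (PreservesFilteredColimits H) →
      ∀ α : Gobj Sg Gg H ⟶ H,
        ∃! h : P ⟶ H, ιP.hom ≫ h = Gmap Sg Gg h ≫ α)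
    -- Q, the initial algebra of X ↦ Id + Σ∘X + Γ∘P∘X among finitary endofunctors
    (Q : C ⥤ C) (hQ : Nonempty (PreservesFilteredColimits Q))
    (ιQ : (𝟭 C ⨿ ((Q ⋙ Sg) ⨿ (Q ⋙ P ⋙ Gg))) ≅ Q)
    (hQinit : ∀ H : C ⥤ C, Nonempty (PreservesFilteredColimits H) →
      ∀ α : (𝟭 C ⨿ ((H ⋙ Sg) ⨿ (H ⋙ P ⋙ Gg))) ⟶ H,
        ∃! h : Q ⟶ H,
          ιQ.hom ≫ h =
            coprod.map (𝟙 (𝟭 C))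
              (coprod.map (Functor.whiskerRight h Sg) (Functor.whiskerRight h (P ⋙ Gg))) ≫ α) :
    Nonempty (P ≅ Q) :=
  initial_grammar_algebra_iso_free_monad_general Sg Gg P hP ιP hPinit Q hQ ιQ hQinit
end

section
/- Mendler-style adjoint folds: given an adjunction L ⊣ R : D → C, an endofunctor G : D → D with initial algebra (μG, in), an object B of C, and a natural transformation Φ : C(L −, B) ⟹ C(L(G −), B) (natural in the D-variable), there exists a unique morphism x : L(μG) → B satisfying x = Φ_{μG}(x) ∘ L(in⁻¹); moreover its adjoint transpose satisfies ⌊x⌋ = ⦇ ⌊Φ_{R B}(ε_B)⌋ ⦈, the catamorphism to the G-algebra on R B with structure map the transpose of Φ_{R B}(ε_B). -/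
/-!
By naturality (a Yoneda argument), `Φ` is determined by its value at the counit:
`Φ X t = L(G ⌊t⌋) ≫ Φ (R B) ε_B`. Transposing, the equation `x = L(in⁻¹) ≫ Φ x` says exactly
that `⌊x⌋` is a `G`-algebra morphism from `(μG, in)` to `(R B, ⌊Φ (R B) ε_B⌋)`, so initiality
gives existence and uniqueness at once.
-/

open CategoryTheory CategoryTheory.Limits

universe v₁ v₂ u₁ u₂

namespace CategoryTheory.Adjunction

variable {D : Type u₁} {E : Type u₂} [Category.{v₁} D] [Category.{v₂} E]
  {L : D ⥤ E} {R : E ⥤ D} (adj : L ⊣ R) {G : D ⥤ D} {B : E}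
  (Φ : ∀ X : D, (L.obj X ⟶ B) → (L.obj (G.obj X) ⟶ B))

abbrev mendlerAlgebra : Endofunctor.Algebra G :=
  ⟨R.obj B, adj.homEquiv _ _ (Φ (R.obj B) (adj.counit.app B))⟩

variable {Φ}
variable (hΦ : ∀ {X Y : D} (g : Y ⟶ X) (t : L.obj X ⟶ B),
  Φ Y (L.map g ≫ t) = L.map (G.map g) ≫ Φ X t)
include hΦ

theorem mendler_apply_eq_map_comp_counit {X : D} (t : L.obj X ⟶ B) :
    Φ X t = L.map (G.map (adj.homEquiv X B t)) ≫ Φ (R.obj B) (adj.counit.app B) := by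
  conv_lhs => rw [← (adj.homEquiv X B).symm_apply_apply t, adj.homEquiv_counit]
  exact hΦ _ _

theorem homEquiv_mendler_apply {X : D} (t : L.obj X ⟶ B) :
    adj.homEquiv _ _ (Φ X t) = G.map (adj.homEquiv X B t) ≫ (adj.mendlerAlgebra Φ).str := by
  rw [adj.mendler_apply_eq_map_comp_counit hΦ, adj.homEquiv_naturality_left]

theorem mendler_fixed_point_iff (M : Endofunctor.Algebra G) [IsIso M.str]
    (x : L.obj M.a ⟶ B) :
    x = L.map (inv M.str) ≫ Φ M.a x ↔
      G.map (adj.homEquiv _ _ x) ≫ (adj.mendlerAlgebra Φ).str = M.str ≫ adj.homEquiv _ _ x := by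
  rw [Functor.map_inv, IsIso.eq_inv_comp, ← (adj.homEquiv _ _).apply_eq_iff_eq,
    adj.homEquiv_naturality_left, adj.homEquiv_mendler_apply hΦ]
  exact eq_comm

end CategoryTheory.Adjunction

/-- Mendler-style adjoint folds: given an adjunction `L ⊣ R`, an endofunctor `G` on
the domain of `R`'s codomain... — concretely: `L : D ⥤ E` with right adjoint `R`,
`G : D ⥤ D` with initial algebra `(M, in)` (whose structure map is invertible, by
Lambek's lemma), an object `B : E`, and a natural transformation
`Φ : (L.obj − ⟶ B) ⟹ (L.obj (G.obj −) ⟶ B)` (naturality is `hΦ`), there is a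
unique `x : L.obj M.a ⟶ B` with `x = Φ(x) ∘ L(in⁻¹)`; moreover any such `x` has
adjoint transpose the catamorphism to the `G`-algebra on `R.obj B` whose structure
map is the transpose of `Φ (R.obj B) (ε_B)`. -/
theorem mendler_adjoint_fold {D : Type u₁} {E : Type u₂}
    [Category.{v₁} D] [Category.{v₂} E]
    (L : D ⥤ E) (R : E ⥤ D) (adj : L ⊣ R)
    (G : D ⥤ D) (M : Endofunctor.Algebra G) (hM : IsInitial M) [IsIso M.str]
    (B : E)
    (Φ : ∀ X : D, (L.obj X ⟶ B) → (L.obj (G.obj X) ⟶ B))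
    (hΦ : ∀ {X Y : D} (g : Y ⟶ X) (t : L.obj X ⟶ B),
      Φ Y (L.map g ≫ t) = L.map (G.map g) ≫ Φ X t) :
    (∃! x : L.obj M.a ⟶ B, x = L.map (inv M.str) ≫ Φ M.a x) ∧
    ∀ x : L.obj M.a ⟶ B, x = L.map (inv M.str) ≫ Φ M.a x →
      (adj.homEquiv M.a B) x =
        (hM.to ⟨R.obj B, (adj.homEquiv (G.obj (R.obj B)) B)
          (Φ (R.obj B) (adj.counit.app B))⟩).f := by
  have transpose_eq (x : L.obj M.a ⟶ B) (hx : x = L.map (inv M.str) ≫ Φ M.a x) :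
      adj.homEquiv M.a B x = (hM.to (adj.mendlerAlgebra Φ)).f :=
    congrArg Endofunctor.Algebra.Hom.f
      (hM.hom_ext (⟨_, (adj.mendler_fixed_point_iff hΦ M x).mp hx⟩ : M ⟶ adj.mendlerAlgebra Φ) _)
  refine ⟨⟨(adj.homEquiv M.a B).symm (hM.to (adj.mendlerAlgebra Φ)).f, ?_, ?_⟩, transpose_eq⟩
  · refine (adj.mendler_fixed_point_iff hΦ M _).mpr ?_
    rw [Equiv.apply_symm_apply]
    exact (hM.to _).h
  · intro y hy
    rw [← transpose_eq y hy, Equiv.symm_apply_apply]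
end
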